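/- arXiv:1703.08693 — 3 statements merged into one kernel-verified Lean document; each statement's English description precedes it below -/
import Mathlib

section
/- Let (P, y) be a KZ doctrine on a 2-category 𝒞 and L : A ⟶ B a P-admissible 1-cell. Then PL := lan_L is fully faithful if and only if every left extension along L into a P-cocomplete object (as guaranteed by P-admissibility) is exhibited by an invertible 2-cell; that is, if and only if for every P-cocomplete X and every H : A ⟶ X with left extension H̄ of H along y_A, the 2-cell exhibiting H̄·res_L·y_B as a left extension of H along L is invertible. -/
open CategoryTheory Bicategory

universe w v u

variable {𝒞 : Type u} [Bicategory.{w, v} 𝒞]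

/-- A 2-cell `η : I ⟶ L ≫ R` exhibits `R` as a left extension of `I` along `L` when
pasting with `η` gives a bijection between 2-cells `R ⟶ M` and 2-cells `I ⟶ L ≫ M`. -/
def ExhibitsLeftExt {a b c : 𝒞} (L : a ⟶ b) (I : a ⟶ c) (R : b ⟶ c)
    (η : I ⟶ L ≫ R) : Prop :=
  ∀ M : b ⟶ c, Function.Bijective (fun σ : R ⟶ M => η ≫ L ◁ σ)

/-- The left extension `(R, η)` of `I` along `L` is respected by `E` when the whiskering of
`η` by `E` exhibits `R ≫ E` as a left extension of `I ≫ E` along `L`. -/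
def RespectsLeftExt {a b c d : 𝒞} (L : a ⟶ b) (I : a ⟶ c) (R : b ⟶ c)
    (η : I ⟶ L ≫ R) (E : c ⟶ d) : Prop :=
  ExhibitsLeftExt L (I ≫ E) (R ≫ E) ((η ▷ E) ≫ (α_ L R E).hom)

/-- A 2-cell `η : I ⟶ L ≫ R` exhibits `L` as a left lifting of `I` through `R` when pasting
with `η` gives a bijection between 2-cells `L ⟶ K` and 2-cells `I ⟶ K ≫ R`. -/
def ExhibitsLeftLift {a b c : 𝒞} (R : b ⟶ c) (I : a ⟶ c) (L : a ⟶ b)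
    (η : I ⟶ L ≫ R) : Prop :=
  ∀ K : a ⟶ b, Function.Bijective (fun δ : L ⟶ K => η ≫ δ ▷ R)

/-- The left lifting is absolute when it is preserved by whiskering with any 1-cell `F`. -/
def ExhibitsAbsLeftLift {a b c : 𝒞} (R : b ⟶ c) (I : a ⟶ c) (L : a ⟶ b)
    (η : I ⟶ L ≫ R) : Prop :=
  ∀ {x : 𝒞} (F : x ⟶ a),
    ExhibitsLeftLift R (F ≫ I) (F ≫ L) ((F ◁ η) ≫ (α_ F L R).inv)

/-- A 1-cell is (representably) fully faithful when whiskering by it is bijective on 2-cells. -/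
def FullyFaithful1Cell {a b : 𝒞} (F : a ⟶ b) : Prop :=
  ∀ {x : 𝒞} (u v : x ⟶ a), Function.Bijective (fun σ : u ⟶ v => σ ▷ F)

/-- A KZ doctrine on a 2-category (Marmolejo–Wood style, in terms of left extensions). -/
structure KZDoctrine (𝒞 : Type u) [Bicategory.{w, v} 𝒞] where
  /-- action on objects -/
  P : 𝒞 → 𝒞
  /-- the units -/
  y : ∀ A : 𝒞, A ⟶ P A
  /-- chosen left extensions along the units -/
  ext : ∀ {A C : 𝒞}, (A ⟶ P C) → (P A ⟶ P C)
  /-- the invertible 2-cells exhibiting the chosen left extensions -/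
  c : ∀ {A C : 𝒞} (F : A ⟶ P C), F ≅ y A ≫ ext F
  ext_isLeftExt : ∀ {A C : 𝒞} (F : A ⟶ P C),
    ExhibitsLeftExt (y A) F (ext F) (c F).hom
  /-- (a) the identity 2-cell exhibits `𝟙 (P A)` as a left extension of `y A` along `y A` -/
  y_selfExt : ∀ A : 𝒞, ExhibitsLeftExt (y A) (y A) (𝟙 (P A)) (ρ_ (y A)).inv
  /-- (b) the chosen left extensions respect each other -/
  ext_respects : ∀ {A B C : 𝒞} (F : A ⟶ P B) (G : B ⟶ P C),
    RespectsLeftExt (y A) F (ext F) (c F).hom (ext G)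

/-- `lan L` (also denoted `PL`), the chosen left extension of `y B ∘ L` along `y A`. -/
abbrev KZDoctrine.lan (D : KZDoctrine 𝒞) {A B : 𝒞} (L : A ⟶ B) : D.P A ⟶ D.P B :=
  D.ext (L ≫ D.y B)

/-- An object `X` is `P`-cocomplete when every `G : A ⟶ X` admits a left extension along
`y A` exhibited by an invertible 2-cell, and these left extensions respect the chosen left
extensions of the KZ doctrine. -/
def PCocomplete (D : KZDoctrine 𝒞) (X : 𝒞) : Prop :=
  ∀ {A : 𝒞} (G : A ⟶ X), ∃ (Gb : D.P A ⟶ X) (cG : G ≅ D.y A ≫ Gb),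
    ExhibitsLeftExt (D.y A) G Gb cG.hom ∧
    ∀ {A' : 𝒞} (F : A' ⟶ D.P A),
      RespectsLeftExt (D.y A') F (D.ext F) (D.c F).hom Gb

/-- A 1-cell is a `P`-homomorphism when it respects all left extensions along units. -/
def PHomomorphism (D : KZDoctrine 𝒞) {X Y : 𝒞} (E : X ⟶ Y) : Prop :=
  ∀ {A : 𝒞} (G : A ⟶ X) (Gb : D.P A ⟶ X) (η : G ⟶ D.y A ≫ Gb),
    ExhibitsLeftExt (D.y A) G Gb η → RespectsLeftExt (D.y A) G Gb η E

/-- The data `(R, φ)` witnesses `P`-admissibility of `L`: `φ` exhibits `R` as a left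
extension of `y A` along `L`, and this left extension is respected by every left extension
`Hb : P A ⟶ X` along `y A` into every `P`-cocomplete object `X`. -/
def AdmissibleData (D : KZDoctrine 𝒞) {A B : 𝒞} (L : A ⟶ B) (R : B ⟶ D.P A)
    (φ : D.y A ⟶ L ≫ R) : Prop :=
  ExhibitsLeftExt L (D.y A) R φ ∧
  ∀ {X : 𝒞}, PCocomplete D X →
    ∀ (H : A ⟶ X) (Hb : D.P A ⟶ X) (cH : H ≅ D.y A ≫ Hb),
      ExhibitsLeftExt (D.y A) H Hb cH.hom → RespectsLeftExt L (D.y A) R φ Hb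

/-- A 1-cell `L` is `P`-admissible when some `(R, φ)` witnesses its admissibility. -/
def PAdmissible (D : KZDoctrine 𝒞) {A B : 𝒞} (L : A ⟶ B) : Prop :=
  ∃ (R : B ⟶ D.P A) (φ : D.y A ⟶ L ≫ R), AdmissibleData D L R φ

/-! A left adjoint is fully faithful iff its unit is invertible. The 2-cell in the statement is
the unit whiskered by `y A` and `Hb`, up to invertible cells; this gives one implication, and for
`H = y A`, `Hb = 𝟙` it shows that `y A ◁ unit` is invertible. Whiskering by `y A` reflects
invertibility of 2-cells between left extensions along `y A`, but `lan L ≫ res` need not be one.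
So the unit is factored as `u ≫ lan L ◁ κ` through `lan L ≫ ext (y B ≫ res)`, which is one,
with `κ : ext (y B ≫ res) ⟶ res` the comparison; then `u` is invertible, and by the triangle
identity so is `lan L ◁ (κ ▷ lan L ≫ counit)`. A 1-cell `f` with `𝟙 ≅ f ≫ g` and `f ◁ e`
invertible for some `e : g ≫ f ⟶ 𝟙` is fully faithful. -/

section Bicat

variable {a b c x : 𝒞}

lemma whisker_exchange_to_id {p q : x ⟶ a} {k : a ⟶ a} (σ : p ⟶ q)
    (e : k ⟶ 𝟙 a) :
    σ ▷ k ≫ q ◁ e = p ◁ e ≫ (ρ_ p).hom ≫ σ ≫ (ρ_ q).inv := by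
  rw [← whisker_exchange, whiskerRight_id]

lemma whiskerRight_injective_of_isIso_whiskerLeft {p q : x ⟶ a} {k : a ⟶ a} (e : k ⟶ 𝟙 a)
    [IsIso (p ◁ e)] : Function.Injective (fun σ : p ⟶ q => σ ▷ k) := by
  intro σ σ' h
  have := congrArg (· ≫ q ◁ e) h
  simp only [whisker_exchange_to_id] at this
  simpa using (cancel_epi _).1 this

lemma whiskerRight_bijective_of_isIso {p q : x ⟶ a} {k : a ⟶ a} (e : k ⟶ 𝟙 a) [IsIso e] :
    Function.Bijective (fun σ : p ⟶ q => σ ▷ k) := by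
  refine Function.Bijective.of_comp_left (f := (· ≫ q ◁ e)) ?_
    ((isIso_iff_yoneda_map_bijective (q ◁ e)).1 inferInstance _).1
  convert ((asIso (p ◁ e ≫ (ρ_ p).hom)).symm.homCongr (ρ_ q).symm).bijective using 1
  funext σ
  simp [whisker_exchange_to_id]

lemma fullyFaithful1Cell_of_isIso {f : a ⟶ b} {g : b ⟶ a} (u : 𝟙 a ⟶ f ≫ g) [IsIso u]
    (e : g ≫ f ⟶ 𝟙 b) [IsIso (f ◁ e)] : FullyFaithful1Cell f := by
  intro _ p q
  have hg : Function.Injective (fun χ : p ≫ f ⟶ q ≫ f => χ ▷ g) := by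
    intro χ χ' h
    have : IsIso ((p ≫ f) ◁ e) := by rw [comp_whiskerLeft]; infer_instance
    apply whiskerRight_injective_of_isIso_whiskerLeft e
    simp only [whiskerRight_comp] at h ⊢
    rw [h]
  refine Function.Bijective.of_comp_left ?_ hg
  convert ((α_ p f g).symm.homCongr (α_ q f g).symm).bijective.comp
    (whiskerRight_bijective_of_isIso (inv u)) using 1
  funext σ
  simp [whiskerRight_comp]

lemma isIso_whiskerLeft_of_iso {f f' : a ⟶ b} (i : f ≅ f') {h h' : b ⟶ c} (κ : h ⟶ h')
    [IsIso (f' ◁ κ)] : IsIso (f ◁ κ) := by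
  rw [show f ◁ κ = i.hom ▷ h ≫ f' ◁ κ ≫ i.inv ▷ h' by
    rw [← whisker_exchange_assoc, ← comp_whiskerRight, Iso.hom_inv_id, id_whiskerRight,
      Category.comp_id]]
  infer_instance

end Bicat

namespace CategoryTheory.Bicategory.Adjunction

variable {a b : 𝒞}

lemma isIso_unit_of_fullyFaithful1Cell {f : a ⟶ b} {g : b ⟶ a}
    (adj : Bicategory.Adjunction f g) (hf : FullyFaithful1Cell f) : IsIso adj.unit := by
  refine isIso_of_yoneda_map_bijective _ fun p => ?_
  have : (fun σ : p ⟶ 𝟙 a => σ ≫ adj.unit) =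
      adj.homEquiv₂ ∘ (· ≫ (λ_ f).hom) ∘ (fun σ : p ⟶ 𝟙 a => σ ▷ f) := by
    funext σ
    simp only [Function.comp_apply, homEquiv₂_apply]
    symm
    calc _ = (ρ_ p).inv ≫ (p ◁ adj.unit ≫ σ ▷ (f ≫ g)) ≫ (λ_ (f ≫ g)).hom := by bicategory
      _ = (ρ_ p).inv ≫ (σ ▷ 𝟙 a ≫ 𝟙 a ◁ adj.unit) ≫ (λ_ (f ≫ g)).hom := by
        rw [whisker_exchange]
      _ = σ ≫ adj.unit := by bicategory
  rw [this]
  exact adj.homEquiv₂.bijective.comp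
    (((isIso_iff_yoneda_map_bijective _).1 inferInstance _).comp (hf p (𝟙 a)))

lemma fullyFaithful1Cell_of_unit_eq_comp {f : a ⟶ b} {g g' : b ⟶ a}
    (adj : Bicategory.Adjunction f g) (u : 𝟙 a ⟶ f ≫ g') [IsIso u] (κ : g' ⟶ g)
    (hu : u ≫ f ◁ κ = adj.unit) : FullyFaithful1Cell f := by
  have triangle : u ▷ f ≫ (α_ f g' f).hom ≫ f ◁ (κ ▷ f ≫ adj.counit) =
      (λ_ f).hom ≫ (ρ_ f).inv := by
    rw [← adj.left_triangle, ← hu, leftZigzag]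
    bicategory
  have : IsIso (f ◁ (κ ▷ f ≫ adj.counit)) := by
    have h : IsIso (u ▷ f ≫ (α_ f g' f).hom ≫ f ◁ (κ ▷ f ≫ adj.counit)) := by
      rw [triangle]; infer_instance
    rwa [isIso_comp_left_iff, isIso_comp_left_iff] at h
  exact fun {_} => fullyFaithful1Cell_of_isIso u (κ ▷ f ≫ adj.counit)

end CategoryTheory.Bicategory.Adjunction

lemma ExhibitsLeftExt.whiskerLeft_injective {a b c : 𝒞} {L : a ⟶ b} {I : a ⟶ c} {R : b ⟶ c}
    {θ : I ⟶ L ≫ R} (h : ExhibitsLeftExt L I R θ) (M : b ⟶ c) :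
    Function.Injective (fun σ : R ⟶ M => L ◁ σ) :=
  fun _ _ e => (h M).1 (congrArg (θ ≫ ·) e)

lemma ExhibitsLeftExt.isIso_of_isIso_whiskerLeft {a b c : 𝒞} {L : a ⟶ b} {I J : a ⟶ c}
    {S K : b ⟶ c} {θS : J ⟶ L ≫ S} {θK : I ⟶ L ≫ K} (hS : ExhibitsLeftExt L J S θS)
    (hK : ExhibitsLeftExt L I K θK) (η : S ⟶ K) [IsIso (L ◁ η)] : IsIso η := by
  obtain ⟨ζ, hζ⟩ := (hK S).2 (θK ≫ inv (L ◁ η))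
  have hζη : ζ ≫ η = 𝟙 K := (hK K).1 (by simp [reassoc_of% hζ])
  have hLζ : L ◁ ζ = inv (L ◁ η) := by
    apply IsIso.eq_inv_of_inv_hom_id
    rw [← whiskerLeft_comp, hζη, whiskerLeft_id]
  refine ⟨ζ, hS.whiskerLeft_injective S ?_, hζη⟩
  simp [hLζ]

namespace KZDoctrine

variable (D : KZDoctrine 𝒞)

lemma pCocomplete_P (C : 𝒞) : PCocomplete D (D.P C) :=
  fun G => ⟨D.ext G, D.c G, D.ext_isLeftExt G, fun F => D.ext_respects F G⟩

lemma isIso_whiskerLeft_lan_whiskerLeft {A B X : 𝒞} (L : A ⟶ B) {M N : D.P B ⟶ X}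
    (κ : M ⟶ N) [IsIso (D.y B ◁ κ)] : IsIso (D.y A ◁ D.lan L ◁ κ) := by
  have : IsIso ((L ≫ D.y B) ◁ κ) := by rw [comp_whiskerLeft]; infer_instance
  have := isIso_whiskerLeft_of_iso (D.c (L ≫ D.y B)).symm κ
  rw [comp_whiskerLeft_symm]
  infer_instance

lemma exists_isIso_comp_lan_whiskerLeft_eq_unit {A B : 𝒞} {L : A ⟶ B}
    {res : D.P B ⟶ D.P A} (adj : Bicategory.Adjunction (D.lan L) res)
    [IsIso (D.y A ◁ adj.unit)] :
    ∃ (u : 𝟙 (D.P A) ⟶ D.lan L ≫ D.ext (D.y B ≫ res)) (κ : D.ext (D.y B ≫ res) ⟶ res),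
      IsIso u ∧ u ≫ D.lan L ◁ κ = adj.unit := by
  obtain ⟨κ, hκ⟩ := (D.ext_isLeftExt (D.y B ≫ res) res).2 (𝟙 _)
  have : IsIso (D.y B ◁ κ) := by rw [← IsIso.inv_eq_of_hom_inv_id hκ]; infer_instance
  have := D.isIso_whiskerLeft_lan_whiskerLeft L κ
  obtain ⟨u, hu⟩ := (D.y_selfExt A _).2
    ((ρ_ _).inv ≫ D.y A ◁ adj.unit ≫ inv (D.y A ◁ D.lan L ◁ κ))
  have hyu : D.y A ◁ u = D.y A ◁ adj.unit ≫ inv (D.y A ◁ D.lan L ◁ κ) := by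
    simpa using hu
  refine ⟨u, κ, ?_, ?_⟩
  · have : IsIso (D.y A ◁ u) := by rw [hyu]; infer_instance
    exact (D.y_selfExt A).isIso_of_isIso_whiskerLeft (D.ext_respects (L ≫ D.y B) _) u
  · apply (D.y_selfExt A).whiskerLeft_injective
    simp [hyu]

end KZDoctrine

/-- For `P`-admissible `L` (with `lan L ⊣ res`), `PL := lan L` is fully
faithful iff for every `P`-cocomplete `X` and every left extension `(Hb, c_H)` of
`H : A ⟶ X` along `y A`, the canonical 2-cell exhibiting `Hb ∘ res ∘ y B` as a left
extension of `H` along `L` is invertible. -/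
theorem stmt13 (D : KZDoctrine 𝒞) {A B : 𝒞} (L : A ⟶ B)
    (res : D.P B ⟶ D.P A) (adj : Bicategory.Adjunction (D.lan L) res) :
    FullyFaithful1Cell (D.lan L) ↔
      ∀ (X : 𝒞), PCocomplete D X →
        ∀ (H : A ⟶ X) (Hb : D.P A ⟶ X) (cH : H ≅ D.y A ≫ Hb),
          ExhibitsLeftExt (D.y A) H Hb cH.hom →
          IsIso (cH.hom ≫ (D.y A ◁ (λ_ Hb).inv) ≫ (D.y A ◁ (adj.unit ▷ Hb)) ≫
            (D.y A ◁ (α_ (D.lan L) res Hb).hom) ≫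
            (α_ (D.y A) (D.lan L) (res ≫ Hb)).inv ≫
            ((D.c (L ≫ D.y B)).inv ▷ (res ≫ Hb)) ≫
            (α_ L (D.y B) (res ≫ Hb)).hom) := by
  constructor
  · intro hff X _ H Hb cH _
    have := adj.isIso_unit_of_fullyFaithful1Cell hff
    infer_instance
  · intro h
    have : IsIso (D.y A ◁ adj.unit) := by
      simpa using h _ (D.pCocomplete_P A) _ (𝟙 _) (ρ_ (D.y A)).symm (D.y_selfExt A)
    obtain ⟨u, κ, _, hu⟩ := D.exists_isIso_comp_lan_whiskerLeft_eq_unit adj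
    exact fun {_} => adj.fullyFaithful1Cell_of_unit_eq_comp u κ hu
end

section
/- Let (P, y) be a KZ doctrine on a 2-category 𝒞. An object X of 𝒞 is P-cocomplete if and only if the unit y_X : X ⟶ PX has a left adjoint whose counit is invertible. -/
open CategoryTheory Bicategory

universe w v u

variable {𝒞 : Type u} [Bicategory.{w, v} 𝒞]

/-!
Left adjoints respect all left extensions. Hence, given `l ⊣ y X` with invertible counit, the
left extension `ext (G ≫ y X)` composed with `l` is a left extension of `G ≫ y X ≫ l ≅ G`, and
it respects the doctrine's extensions because `ext (G ≫ y X)` does. Conversely, the extension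
`l` of `𝟙 X` along `y X` comes with an invertible `𝟙 X ≅ y X ≫ l`, whose inverse is the counit;
by axiom (a), 2-cells `𝟙 (P X) ⟶ l ≫ y X` correspond to 2-cells `y X ⟶ y X ≫ l ≫ y X`, and
the unit is the one corresponding to that isomorphism whiskered by `y X`.
-/

section LeftExtension

variable {a b c d e : 𝒞} {L : a ⟶ b} {I : a ⟶ c} {R : b ⟶ c} {η : I ⟶ L ≫ R}

theorem exhibitsLeftExt_iff_isKan :
    ExhibitsLeftExt L I R η ↔ Nonempty (LeftExtension.mk R η).IsKan := by
  constructor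
  · intro h
    refine ⟨.mk (fun s => LeftExtension.homMk ((h s.extension).surjective s.unit).choose
      ((h s.extension).surjective s.unit).choose_spec) fun s τ => ?_⟩
    ext
    exact (h s.extension).injective
      (τ.w.trans ((h s.extension).surjective s.unit).choose_spec.symm)
  · rintro ⟨H⟩ M
    exact ⟨fun σ σ' hσ => H.hom_ext hσ, fun θ => ⟨H.desc (.mk M θ), H.fac (.mk M θ)⟩⟩

theorem ExhibitsLeftExt.respectsLeftExt_of_adjunction (h : ExhibitsLeftExt L I R η)
    {l : c ⟶ d} {r : d ⟶ c} (adj : l ⊣ r) : RespectsLeftExt L I R η l := by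
  obtain ⟨H⟩ := exhibitsLeftExt_iff_isKan.1 h
  exact exhibitsLeftExt_iff_isKan.2 ⟨LeftExtension.isKanOfWhiskerLeftAdjoint H adj⟩

theorem ExhibitsLeftExt.iso_comp (h : ExhibitsLeftExt L I R η) {I' : a ⟶ c} (φ : I' ≅ I) :
    ExhibitsLeftExt L I' R (φ.hom ≫ η) := fun M => by
  simpa [Function.comp_def, Iso.homCongr_apply] using
    (Iso.homCongr φ.symm (Iso.refl _)).bijective.comp (h M)

theorem ExhibitsLeftExt.comp_whiskerLeft_iso (h : ExhibitsLeftExt L I R η) {R' : b ⟶ c}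
    (ψ : R ≅ R') : ExhibitsLeftExt L I R' (η ≫ L ◁ ψ.hom) := fun M => by
  simpa [Function.comp_def, Iso.homCongr_apply] using
    (h M).comp (Iso.homCongr ψ.symm (Iso.refl M)).bijective

theorem RespectsLeftExt.comp {E₁ : c ⟶ d} {E₂ : d ⟶ e}
    (h : RespectsLeftExt L (I ≫ E₁) (R ≫ E₁) (η ▷ E₁ ≫ (α_ L R E₁).hom) E₂) :
    RespectsLeftExt L I R η (E₁ ≫ E₂) := by
  unfold RespectsLeftExt at h ⊢
  convert (h.iso_comp (α_ I E₁ E₂).symm).comp_whiskerLeft_iso (α_ R E₁ E₂) using 1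
  simp only [Iso.symm_hom]
  bicategory

end LeftExtension

theorem exists_adjunction_of_exhibitsLeftExt {x p : 𝒞} {y : x ⟶ p}
    (hy : ExhibitsLeftExt y y (𝟙 p) (ρ_ y).inv) {l : p ⟶ x} (φ : 𝟙 x ≅ y ≫ l)
    (hl : ExhibitsLeftExt y (𝟙 x) l φ.hom) : ∃ adj : l ⊣ y, adj.counit = φ.inv := by
  obtain ⟨η, hη⟩ := (hy (l ≫ y)).surjective ((λ_ y).inv ≫ φ.hom ▷ y ≫ (α_ y l y).hom)
  replace hη : y ◁ η = (ρ_ y).hom ≫ (λ_ y).inv ≫ φ.hom ▷ y ≫ (α_ y l y).hom := by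
    rw [← hη, Iso.hom_inv_id_assoc]
  have left : (λ_ l).inv ≫ leftZigzag η φ.inv ≫ (ρ_ l).hom = 𝟙 l := by
    apply (hl l).injective
    calc φ.hom ≫ y ◁ ((λ_ l).inv ≫ leftZigzag η φ.inv ≫ (ρ_ l).hom)
        = 𝟙 _ ⊗≫ φ.hom ⊗≫ (y ◁ η) ▷ l ⊗≫ (y ≫ l) ◁ φ.inv ⊗≫ 𝟙 _ := by
          rw [leftZigzag]; bicategory
      _ = 𝟙 _ ⊗≫ φ.hom ⊗≫ (φ.hom ▷ (y ≫ l) ≫ (y ≫ l) ◁ φ.inv) ⊗≫ 𝟙 _ := by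
          rw [hη]; bicategory
      _ = 𝟙 _ ⊗≫ φ.hom ⊗≫ (𝟙 x ◁ φ.inv ≫ φ.hom ▷ 𝟙 x) ⊗≫ 𝟙 _ := by
          rw [← whisker_exchange]
      _ = φ.hom ≫ y ◁ 𝟙 l := by simp [bicategoricalComp]
  refine ⟨⟨η, φ.inv, ?_, ?_⟩, rfl⟩
  · rw [← cancel_epi (λ_ l).inv, ← cancel_mono (ρ_ l).hom]
    simpa using left
  · calc rightZigzag η φ.inv
        = 𝟙 _ ⊗≫ y ◁ η ⊗≫ φ.inv ▷ y ⊗≫ 𝟙 _ := by rw [rightZigzag]; bicategory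
      _ = 𝟙 _ ⊗≫ (φ.hom ≫ φ.inv) ▷ y ⊗≫ 𝟙 _ := by rw [hη]; bicategory
      _ = _ := by rw [Iso.hom_inv_id]; bicategory

theorem pCocomplete_of_adjunction (D : KZDoctrine 𝒞) {X : 𝒞} {l : D.P X ⟶ X}
    (adj : l ⊣ D.y X) [IsIso adj.counit] : PCocomplete D X := by
  intro A G
  let φ : G ≅ (G ≫ D.y X) ≫ l :=
    (ρ_ G).symm ≪≫ whiskerLeftIso G (asIso adj.counit).symm ≪≫ (α_ G (D.y X) l).symm
  refine ⟨D.ext (G ≫ D.y X) ≫ l, φ ≪≫ whiskerRightIso (D.c (G ≫ D.y X)) l ≪≫ α_ _ _ _,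
    ?_, fun F => ?_⟩
  · exact ((D.ext_isLeftExt (G ≫ D.y X)).respectsLeftExt_of_adjunction adj).iso_comp φ
  · exact ((D.ext_respects F (G ≫ D.y X)).respectsLeftExt_of_adjunction adj).comp

/-- `X` is `P`-cocomplete iff the unit `y X` has a left adjoint with
invertible counit. -/
theorem stmt16 (D : KZDoctrine 𝒞) (X : 𝒞) :
    PCocomplete D X ↔
      ∃ (l : D.P X ⟶ X) (adj : Bicategory.Adjunction l (D.y X)),
        IsIso adj.counit := by
  constructor
  · intro h
    obtain ⟨l, φ, hl, -⟩ := h (𝟙 X)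
    obtain ⟨adj, hcounit⟩ := exists_adjunction_of_exhibitsLeftExt (D.y_selfExt X) φ hl
    exact ⟨l, adj, hcounit ▸ inferInstance⟩
  · rintro ⟨l, adj, _⟩
    exact pCocomplete_of_adjunction D adj
end

section
/- Let (P, y) be a KZ doctrine on a 2-category 𝒞 and A an object. Define Py_A := lan_{y_A} (the left extension of y_{PA}·y_A along y_A) and μ_A := \overline{id_{PA}} (the left extension of id_{PA} along y_{PA}). Then there is an adjoint triple Py_A ⊣ μ_A ⊣ y_{PA}; in particular both y_A and R_{y_A} = id_{PA} are P-admissible, and R_{R_{y_A}} = y_{PA}. -/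
open CategoryTheory Bicategory

universe w v u

variable {𝒞 : Type u} [Bicategory.{w, v} 𝒞]

/-! `y_{P A}` is dense by axiom (a): the identity is a left extension of it along itself.
As `μ_A` is a left extension of the identity along `y_{P A}` with invertible unit `c`, density
turns `c ▷ y_{P A}` into a unit `𝟙 ⟶ μ_A ≫ y_{P A}` with counit `c⁻¹`. For `P y_A ⊣ μ_A` the
unit again comes from density of `y_A`, and the counit from axiom (b), which makes
`μ_A ≫ P y_A` a left extension along `y_{P A}`, applied to the comparison `P y_A ⟶ y_{P A}`.
Each triangle identity is an endo-2-cell of a left extension, so it suffices to check it after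
pasting with the extension's unit, where it collapses to the defining equations. -/

namespace ExhibitsLeftExt

variable {a b c : 𝒞} {L : a ⟶ b} {I : a ⟶ c} {R : b ⟶ c} {η : I ⟶ L ≫ R}

noncomputable def desc (h : ExhibitsLeftExt L I R η) {M : b ⟶ c} (τ : I ⟶ L ≫ M) : R ⟶ M :=
  (Equiv.ofBijective _ (h M)).symm τ

lemma fac (h : ExhibitsLeftExt L I R η) {M : b ⟶ c} (τ : I ⟶ L ≫ M) :
    η ≫ L ◁ h.desc τ = τ :=
  (Equiv.ofBijective _ (h M)).apply_symm_apply τ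

lemma hom_ext (h : ExhibitsLeftExt L I R η) {M : b ⟶ c} {σ σ' : R ⟶ M}
    (w : η ≫ L ◁ σ = η ≫ L ◁ σ') : σ = σ' :=
  (h M).1 w

lemma eq_id (h : ExhibitsLeftExt L I R η) {σ : R ⟶ R} (w : η ≫ L ◁ σ = η) : σ = 𝟙 R :=
  h.hom_ext (by rw [w, whiskerLeft_id, Category.comp_id])

lemma of_iso {I' : a ⟶ c} {R' : b ⟶ c} (h : ExhibitsLeftExt L I R η)
    (eI : I' ≅ I) (eR : R ≅ R') {η' : I' ⟶ L ≫ R'}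
    (w : η' = eI.hom ≫ η ≫ L ◁ eR.hom) : ExhibitsLeftExt L I' R' η' := by
  intro M
  have hcomp : (fun τ : R' ⟶ M => η' ≫ L ◁ τ)
      = eI.symm.homFromEquiv ∘ (fun σ : R ⟶ M => η ≫ L ◁ σ) ∘ eR.symm.homFromEquiv := by
    funext τ
    simp [w]
  rw [hcomp]
  exact eI.symm.homFromEquiv.bijective.comp ((h M).comp eR.symm.homFromEquiv.bijective)

lemma whiskerLeft_desc {M : b ⟶ b} (h : ExhibitsLeftExt L L (𝟙 b) (ρ_ L).inv)
    (τ : L ⟶ L ≫ M) : L ◁ h.desc τ = (ρ_ L).hom ≫ τ := by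
  rw [← Iso.inv_comp_eq]
  exact h.fac τ

end ExhibitsLeftExt

lemma exhibitsLeftExt_id {a c : 𝒞} (f : a ⟶ c) : ExhibitsLeftExt (𝟙 a) f f (λ_ f).inv := by
  intro M
  have hcomp : (fun σ : f ⟶ M => (λ_ f).inv ≫ 𝟙 a ◁ σ) = (λ_ M).symm.homToEquiv := by
    funext σ
    simp
  rw [hcomp]
  exact Equiv.bijective _

lemma respectsLeftExt_rightUnitor_of_iso {a b c : 𝒞} {L : a ⟶ b} {H : a ⟶ c} {E : b ⟶ c}
    (e : H ≅ L ≫ E) (h : ExhibitsLeftExt L H E e.hom) :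
    RespectsLeftExt L L (𝟙 b) (ρ_ L).inv E :=
  h.of_iso e.symm (λ_ E).symm (by rw [Iso.symm_hom, Iso.symm_hom, Iso.inv_hom_id_assoc]; bicategory)

lemma respectsLeftExt_id {a c d : 𝒞} (I : a ⟶ c) (E : c ⟶ d) :
    RespectsLeftExt (𝟙 a) I I (λ_ I).inv E :=
  (exhibitsLeftExt_id (I ≫ E)).of_iso (Iso.refl _) (Iso.refl _) (by simp)

section Zigzag

variable {a b : 𝒞} {f : a ⟶ b} {g : b ⟶ a} {unit : 𝟙 a ⟶ f ≫ g} {counit : g ≫ f ⟶ 𝟙 b}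

lemma leftZigzag_eq_of_eq_id (h : (λ_ f).inv ≫ leftZigzag unit counit ≫ (ρ_ f).hom = 𝟙 f) :
    leftZigzag unit counit = (λ_ f).hom ≫ (ρ_ f).inv := by
  simpa using (λ_ f).hom ≫= h =≫ (ρ_ f).inv

lemma rightZigzag_eq_of_eq_id (h : (ρ_ g).inv ≫ rightZigzag unit counit ≫ (λ_ g).hom = 𝟙 g) :
    rightZigzag unit counit = (ρ_ g).hom ≫ (λ_ g).inv := by
  simpa using (ρ_ g).hom ≫= h =≫ (λ_ g).inv

end Zigzag

section Dense

variable {b c : 𝒞} {k : b ⟶ c} {g : c ⟶ b}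

noncomputable def adjunctionOfLeftExtAlongDense (e : 𝟙 b ≅ k ≫ g)
    (hk : ExhibitsLeftExt k k (𝟙 c) (ρ_ k).inv) (hg : ExhibitsLeftExt k (𝟙 b) g e.hom) :
    g ⊣ k where
  unit := hk.desc ((λ_ k).inv ≫ e.hom ▷ k ≫ (α_ _ _ _).hom)
  counit := e.inv
  left_triangle := by
    refine leftZigzag_eq_of_eq_id (hg.eq_id ?_)
    calc e.hom ≫ k ◁ ((λ_ g).inv ≫ leftZigzag _ e.inv ≫ (ρ_ g).hom)
        = e.hom ⊗≫ (k ◁ hk.desc ((λ_ k).inv ≫ e.hom ▷ k ≫ (α_ _ _ _).hom)) ▷ g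
            ⊗≫ (k ≫ g) ◁ e.inv ⊗≫ 𝟙 _ := by
          bicategory
      _ = e.hom ⊗≫ (e.hom ▷ (k ≫ g) ≫ (k ≫ g) ◁ e.inv) ⊗≫ 𝟙 _ := by
          rw [hk.whiskerLeft_desc]; bicategory
      _ = (e.hom ≫ e.inv) ⊗≫ e.hom := by
          rw [← whisker_exchange]; bicategory
      _ = e.hom := by
          rw [Iso.hom_inv_id]; bicategory
  right_triangle := by
    rw [rightZigzag, hk.whiskerLeft_desc]
    calc _ = (ρ_ k).hom ≫ (λ_ k).inv ≫ (e.hom ≫ e.inv) ▷ k := by bicategory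
      _ = _ := by rw [Iso.hom_inv_id]; simp

end Dense

namespace KZDoctrine

variable (D : KZDoctrine 𝒞) (A : 𝒞)

-- `μ_A` is `D.ext (𝟙 (D.P A))`.
noncomputable def muAdjunction : D.ext (𝟙 (D.P A)) ⊣ D.y (D.P A) :=
  adjunctionOfLeftExtAlongDense (D.c (𝟙 (D.P A))) (D.y_selfExt (D.P A))
    (D.ext_isLeftExt (𝟙 (D.P A)))

noncomputable def lanYToY : D.lan (D.y A) ⟶ D.y (D.P A) :=
  (D.ext_isLeftExt (D.y A ≫ D.y (D.P A))).desc (𝟙 _)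

lemma lanYToY_fac : (D.c (D.y A ≫ D.y (D.P A))).hom ≫ D.y A ◁ D.lanYToY A = 𝟙 _ :=
  (D.ext_isLeftExt _).fac _

noncomputable def lanYUnit : 𝟙 (D.P A) ⟶ D.lan (D.y A) ≫ D.ext (𝟙 (D.P A)) :=
  (D.y_selfExt A).desc
    ((ρ_ (D.y A)).inv ≫ D.y A ◁ (D.c (𝟙 (D.P A))).hom ≫ (α_ _ _ _).inv
      ≫ (D.c (D.y A ≫ D.y (D.P A))).hom ▷ D.ext (𝟙 (D.P A)) ≫ (α_ _ _ _).hom)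

noncomputable def lanYCounit : D.ext (𝟙 (D.P A)) ≫ D.lan (D.y A) ⟶ 𝟙 (D.P (D.P A)) :=
  ExhibitsLeftExt.desc (D.ext_respects (𝟙 (D.P A)) (D.y A ≫ D.y (D.P A)))
    ((λ_ (D.lan (D.y A))).hom ≫ D.lanYToY A ≫ (ρ_ (D.y (D.P A))).inv)

lemma lanYCounit_fac :
    ((D.c (𝟙 (D.P A))).hom ▷ D.lan (D.y A) ≫ (α_ _ _ _).hom) ≫ D.y (D.P A) ◁ D.lanYCounit A
      = (λ_ (D.lan (D.y A))).hom ≫ D.lanYToY A ≫ (ρ_ (D.y (D.P A))).inv :=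
  ExhibitsLeftExt.fac (D.ext_respects _ _) _

lemma lanYUnit_whiskerRight_lanYToY :
    D.lanYUnit A ≫ D.lanYToY A ▷ D.ext (𝟙 (D.P A)) = (D.c (𝟙 (D.P A))).hom := by
  apply (D.y_selfExt A).hom_ext
  calc (ρ_ (D.y A)).inv ≫ D.y A ◁ (D.lanYUnit A ≫ D.lanYToY A ▷ D.ext (𝟙 (D.P A)))
      = 𝟙 _ ⊗≫ D.y A ◁ (D.c (𝟙 (D.P A))).hom
          ⊗≫ ((D.c (D.y A ≫ D.y (D.P A))).hom ≫ D.y A ◁ D.lanYToY A) ▷ D.ext (𝟙 (D.P A))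
          ⊗≫ 𝟙 _ := by
        rw [lanYUnit, whiskerLeft_comp, (D.y_selfExt A).whiskerLeft_desc]; bicategory
    _ = (ρ_ (D.y A)).inv ≫ D.y A ◁ (D.c (𝟙 (D.P A))).hom := by
        rw [lanYToY_fac]; bicategory

lemma lanY_left_triangle :
    leftZigzag (D.lanYUnit A) (D.lanYCounit A) = (λ_ (D.lan (D.y A))).hom ≫ (ρ_ _).inv := by
  refine leftZigzag_eq_of_eq_id ((D.ext_isLeftExt (D.y A ≫ D.y (D.P A))).eq_id ?_)
  set cL := D.c (D.y A ≫ D.y (D.P A))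
  calc cL.hom ≫ D.y A ◁ ((λ_ (D.lan (D.y A))).inv
          ≫ leftZigzag (D.lanYUnit A) (D.lanYCounit A) ≫ (ρ_ (D.lan (D.y A))).hom)
      = cL.hom ⊗≫ (D.y A ◁ D.lanYUnit A) ▷ D.lan (D.y A)
          ⊗≫ (D.y A ≫ D.lan (D.y A)) ◁ D.lanYCounit A ⊗≫ 𝟙 _ := by
        bicategory
    _ = cL.hom ⊗≫ D.y A ◁ ((D.c (𝟙 (D.P A))).hom ▷ D.lan (D.y A))
          ⊗≫ (cL.hom ▷ (D.ext (𝟙 (D.P A)) ≫ D.lan (D.y A))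
            ≫ (D.y A ≫ D.lan (D.y A)) ◁ D.lanYCounit A) ⊗≫ 𝟙 _ := by
        rw [lanYUnit, (D.y_selfExt A).whiskerLeft_desc]; bicategory
    _ = cL.hom ⊗≫ D.y A ◁ (((D.c (𝟙 (D.P A))).hom ▷ D.lan (D.y A) ≫ (α_ _ _ _).hom)
            ≫ D.y (D.P A) ◁ D.lanYCounit A) ⊗≫ cL.hom ⊗≫ 𝟙 _ := by
        rw [← whisker_exchange]; bicategory
    _ = (cL.hom ≫ D.y A ◁ D.lanYToY A) ⊗≫ cL.hom := by
        rw [lanYCounit_fac]; bicategory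
    _ = cL.hom := by
        rw [lanYToY_fac]; bicategory

lemma lanY_right_triangle :
    rightZigzag (D.lanYUnit A) (D.lanYCounit A) = (ρ_ (D.ext (𝟙 (D.P A)))).hom ≫ (λ_ _).inv := by
  refine rightZigzag_eq_of_eq_id ((D.ext_isLeftExt (𝟙 (D.P A))).eq_id ?_)
  set cμ := D.c (𝟙 (D.P A))
  calc cμ.hom ≫ D.y (D.P A) ◁ ((ρ_ (D.ext (𝟙 (D.P A)))).inv
          ≫ rightZigzag (D.lanYUnit A) (D.lanYCounit A) ≫ (λ_ (D.ext (𝟙 (D.P A)))).hom)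
      = 𝟙 _ ⊗≫ (cμ.hom ▷ 𝟙 (D.P A) ≫ (D.y (D.P A) ≫ D.ext (𝟙 (D.P A))) ◁ D.lanYUnit A)
          ⊗≫ D.y (D.P A) ◁ (D.lanYCounit A ▷ D.ext (𝟙 (D.P A))) ⊗≫ 𝟙 _ := by
        bicategory
    _ = D.lanYUnit A ⊗≫ ((cμ.hom ▷ D.lan (D.y A) ≫ (α_ _ _ _).hom)
            ≫ D.y (D.P A) ◁ D.lanYCounit A) ▷ D.ext (𝟙 (D.P A)) ⊗≫ 𝟙 _ := by
        rw [← whisker_exchange]; bicategory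
    _ = (D.lanYUnit A ≫ D.lanYToY A ▷ D.ext (𝟙 (D.P A))) ⊗≫ 𝟙 _ := by
        rw [lanYCounit_fac]; bicategory
    _ = cμ.hom := by
        rw [lanYUnit_whiskerRight_lanYToY]; bicategory

noncomputable def lanYAdjunction : D.lan (D.y A) ⊣ D.ext (𝟙 (D.P A)) where
  unit := D.lanYUnit A
  counit := D.lanYCounit A
  left_triangle := D.lanY_left_triangle A
  right_triangle := D.lanY_right_triangle A

lemma admissibleData_y : AdmissibleData D (D.y A) (𝟙 (D.P A)) (ρ_ (D.y A)).inv :=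
  ⟨D.y_selfExt A, fun _ _ _ cH hH => respectsLeftExt_rightUnitor_of_iso cH hH⟩

lemma admissibleData_id :
    AdmissibleData D (𝟙 (D.P A)) (D.y (D.P A)) (λ_ (D.y (D.P A))).inv :=
  ⟨exhibitsLeftExt_id _, fun _ _ Hb _ _ => respectsLeftExt_id _ Hb⟩

end KZDoctrine

/-- the adjoint triple `P y_A ⊣ μ_A ⊣ y_{P A}` where
`P y_A := lan (y A)` and `μ_A := D.ext (𝟙 (P A))`; in particular both `y A` and
`R_{y A} = 𝟙 (P A)` are `P`-admissible, and `R_{R_{y A}} = y (P A)`. -/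
theorem stmt17 (D : KZDoctrine 𝒞) (A : 𝒞) :
    Nonempty (Bicategory.Adjunction (D.lan (D.y A)) (D.ext (𝟙 (D.P A)))) ∧
    Nonempty (Bicategory.Adjunction (D.ext (𝟙 (D.P A))) (D.y (D.P A))) ∧
    AdmissibleData D (D.y A) (𝟙 (D.P A)) (ρ_ (D.y A)).inv ∧
    AdmissibleData D (𝟙 (D.P A)) (D.y (D.P A)) (λ_ (D.y (D.P A))).inv :=
  ⟨⟨D.lanYAdjunction A⟩, ⟨D.muAdjunction A⟩, D.admissibleData_y A, D.admissibleData_id A⟩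
end
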